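/- arXiv:1209.4473 — 2 statements merged into one kernel-verified Lean document; each statement's English description precedes it below -/
import Mathlib

section
/- In the setting of the Journé lemma proof: fix k ≥ 0 and i ∈ {0,…,k}, and let R(k,i) be the collection of 2-maximal rectangles R ⊂ Ω with emb₁(R;Ω) ≤ k and gen₁(R) ≡ i (mod k+1). If R = I×J and R′ = I′×J′ are two distinct rectangles in R(k,i) that intersect, then either I ⊊ I′ and J ⊇ J′, or I′ ⊊ I and J′ ⊇ J. -/
open MeasureTheory Set

/-- The standard dyadic cube of generation `k` (side length `2^{-k}`) at
position `j` in `ℝⁿ`: `∏_d [j_d 2^{-k}, (j_d+1) 2^{-k})`. -/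
def dyCube (n : ℕ) (k : ℤ) (j : Fin n → ℤ) : Set (Fin n → ℝ) :=
  {x | ∀ d, (j d : ℝ) * (2 : ℝ) ^ (-k) ≤ x d ∧ x d < ((j d : ℝ) + 1) * (2 : ℝ) ^ (-k)}

/-- The position index of the `kk`-th dyadic ancestor `I^{(kk)}` of the cube at
position `j`. -/
def ancIdx {n : ℕ} (j : Fin n → ℤ) (kk : ℕ) : Fin n → ℤ := fun d => (j d).fdiv (2 ^ kk)

/-- The dyadic rectangle `R = I × J` of a product dyadic system. -/
def dyRect (n m : ℕ) (k : ℤ) (j : Fin n → ℤ) (l : ℤ) (i : Fin m → ℤ) :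
    Set ((Fin n → ℝ) × (Fin m → ℝ)) :=
  dyCube n k j ×ˢ dyCube m l i

/-- `R^{(kk,0)} = I^{(kk)} × J`: ancestor in the first parameter only. -/
def ancRect (n m : ℕ) (k : ℤ) (j : Fin n → ℤ) (l : ℤ) (i : Fin m → ℤ) (kk : ℕ) :
    Set ((Fin n → ℝ) × (Fin m → ℝ)) :=
  dyRect n m (k - kk) (ancIdx j kk) l i

/-- The enlargement `Ω̃ = {Mχ_Ω > 1/2}`, where `M` is the strong dyadic maximal
operator over the dyadic rectangles: `x ∈ Ω̃` iff some dyadic rectangle `R ∋ x`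
satisfies `μ(R) < 2 μ(R ∩ Ω)`. -/
def tildeSet {n m : ℕ} (μn : Measure (Fin n → ℝ)) (μm : Measure (Fin m → ℝ))
    (Ω : Set ((Fin n → ℝ) × (Fin m → ℝ))) : Set ((Fin n → ℝ) × (Fin m → ℝ)) :=
  {z | ∃ (k : ℤ) (j : Fin n → ℤ) (l : ℤ) (i : Fin m → ℤ),
    z ∈ dyRect n m k j l i ∧
      μn.prod μm (dyRect n m k j l i) < 2 * μn.prod μm (dyRect n m k j l i ∩ Ω)}

/-- `R = I × J` is 2-maximal in `Ω`: `R ⊆ Ω` but `I × J̃ ⊄ Ω` for any dyadic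
`J̃ ⊋ J`. -/
def TwoMaximal {n m : ℕ} (Ω : Set ((Fin n → ℝ) × (Fin m → ℝ)))
    (k : ℤ) (j : Fin n → ℤ) (l : ℤ) (i : Fin m → ℤ) : Prop :=
  dyRect n m k j l i ⊆ Ω ∧
    ∀ (l' : ℤ) (i' : Fin m → ℤ), dyCube m l i ⊂ dyCube m l' i' →
      ¬ dyRect n m k j l' i' ⊆ Ω

/-- Membership of `R = I × J` in the class `R(kk,i)`: `R ⊆ Ω` is 2-maximal,
`emb₁(R;Ω) ≤ kk` (i.e. the `(kk+1)`-st first-parameter ancestor of `R` is not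
contained in `Ω̃`), and `gen₁(R) ≡ i (mod kk+1)`. -/
def InRClass {n m : ℕ} (μn : Measure (Fin n → ℝ)) (μm : Measure (Fin m → ℝ))
    (Ω : Set ((Fin n → ℝ) × (Fin m → ℝ))) (kk : ℕ) (i : ℤ)
    (k : ℤ) (j : Fin n → ℤ) (l : ℤ) (im : Fin m → ℤ) : Prop :=
  TwoMaximal Ω k j l im ∧
    ¬ ancRect n m k j l im (kk + 1) ⊆ tildeSet μn μm Ω ∧
    k % ((kk : ℤ) + 1) = i

lemma dy_interval_subset (k k' a b : ℤ) (hk : k ≤ k') (x : ℝ)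
    (h1 : (a : ℝ) * (2:ℝ) ^ (-k) ≤ x) (h2 : x < ((a:ℝ)+1) * (2:ℝ) ^ (-k))
    (h3 : (b : ℝ) * (2:ℝ) ^ (-k') ≤ x) (h4 : x < ((b:ℝ)+1) * (2:ℝ) ^ (-k')) :
    (a : ℝ) * (2:ℝ) ^ (-k) ≤ (b : ℝ) * (2:ℝ) ^ (-k') ∧
      ((b:ℝ)+1) * (2:ℝ) ^ (-k') ≤ ((a:ℝ)+1) * (2:ℝ) ^ (-k) := by
  set t : ℕ := (k' - k).toNat with ht
  have hkk : (k' - k) = (t : ℤ) := (Int.toNat_of_nonneg (by omega)).symm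
  have hpos' : (0:ℝ) < (2:ℝ) ^ (-k') := zpow_pos (by norm_num) _
  have hsplit : (2:ℝ) ^ (-k) = ((2 ^ t : ℤ) : ℝ) * (2:ℝ) ^ (-k') := by
    push_cast
    rw [← zpow_natCast (2:ℝ) t, ← zpow_add₀ (by norm_num : (2:ℝ) ≠ 0), ← hkk]
    ring_nf
  have e1 : (a:ℝ) * ((2 ^ t : ℤ) : ℝ) * (2:ℝ) ^ (-k') < ((b:ℝ)+1) * (2:ℝ) ^ (-k') := by
    calc (a:ℝ) * ((2 ^ t : ℤ) : ℝ) * (2:ℝ) ^ (-k') = (a:ℝ) * (2:ℝ)^(-k) := by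
          rw [hsplit]; ring
      _ ≤ x := h1
      _ < _ := h4
  have e1' : (a:ℝ) * ((2 ^ t : ℤ) : ℝ) < (b:ℝ) + 1 := lt_of_mul_lt_mul_right e1 hpos'.le
  have e1'' : a * 2 ^ t ≤ b := Int.lt_add_one_iff.mp (by exact_mod_cast e1')
  have e2 : (b:ℝ) * (2:ℝ) ^ (-k') < ((a:ℝ)+1) * ((2 ^ t : ℤ) : ℝ) * (2:ℝ) ^ (-k') := by
    calc (b:ℝ) * (2:ℝ) ^ (-k') ≤ x := h3
      _ < ((a:ℝ)+1) * (2:ℝ)^(-k) := h2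
      _ = _ := by rw [hsplit]; ring
  have e2' : (b:ℝ) < ((a:ℝ)+1) * ((2 ^ t : ℤ) : ℝ) := lt_of_mul_lt_mul_right e2 hpos'.le
  have e2'' : b + 1 ≤ (a + 1) * 2 ^ t := Int.lt_iff_add_one_le.mp (by exact_mod_cast e2')
  constructor
  · calc (a:ℝ) * (2:ℝ)^(-k) = (a:ℝ) * ((2 ^ t : ℤ) : ℝ) * (2:ℝ)^(-k') := by rw [hsplit]; ring
      _ ≤ (b:ℝ) * (2:ℝ)^(-k') := by
          apply mul_le_mul_of_nonneg_right _ hpos'.le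
          exact_mod_cast e1''
  · calc ((b:ℝ)+1) * (2:ℝ)^(-k') ≤ ((a:ℝ)+1) * ((2 ^ t : ℤ) : ℝ) * (2:ℝ)^(-k') := by
          apply mul_le_mul_of_nonneg_right _ hpos'.le
          exact_mod_cast e2''
      _ = ((a:ℝ)+1) * (2:ℝ)^(-k) := by rw [hsplit]; ring

lemma dyCube_subset_of_mem {n : ℕ} {k k' : ℤ} {j j' : Fin n → ℤ} (hk : k ≤ k')
    {x : Fin n → ℝ} (hx : x ∈ dyCube n k j) (hx' : x ∈ dyCube n k' j') :
    dyCube n k' j' ⊆ dyCube n k j := by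
  intro y hy d
  obtain ⟨hL, hR⟩ := dy_interval_subset k k' (j d) (j' d) hk (x d)
    (hx d).1 (hx d).2 (hx' d).1 (hx' d).2
  exact ⟨hL.trans (hy d).1, lt_of_lt_of_le (hy d).2 hR⟩

lemma dyCube_comparable {n : ℕ} {k k' : ℤ} {j j' : Fin n → ℤ}
    {x : Fin n → ℝ} (hx : x ∈ dyCube n k j) (hx' : x ∈ dyCube n k' j') :
    dyCube n k j ⊆ dyCube n k' j' ∨ dyCube n k' j' ⊆ dyCube n k j := by
  rcases le_total k k' with h | h
  · exact Or.inr (dyCube_subset_of_mem h hx hx')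
  · exact Or.inl (dyCube_subset_of_mem h hx' hx)


/-- If two distinct rectangles `R = I × J` and `R' = I' × J'`
of the class `R(kk,i)` intersect, then either `I ⊊ I'` and `J ⊇ J'`, or
`I' ⊊ I` and `J' ⊇ J`. -/
theorem stmt13 {n m : ℕ} (hn : 0 < n) (hm : 0 < m)
    (μn : Measure (Fin n → ℝ)) (μm : Measure (Fin m → ℝ)) [SFinite μn] [SFinite μm]
    (Ω : Set ((Fin n → ℝ) × (Fin m → ℝ)))
    (hΩfin : μn.prod μm Ω < ⊤)
    (hΩcov : ∀ x ∈ Ω, ∃ (k : ℤ) (j : Fin n → ℤ) (l : ℤ) (i : Fin m → ℤ),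
      x ∈ dyRect n m k j l i ∧ dyRect n m k j l i ⊆ Ω)
    (kk : ℕ) (i : ℤ) (hi₀ : 0 ≤ i) (hik : i ≤ kk)
    (k₁ : ℤ) (j₁ : Fin n → ℤ) (l₁ : ℤ) (i₁ : Fin m → ℤ)
    (k₂ : ℤ) (j₂ : Fin n → ℤ) (l₂ : ℤ) (i₂ : Fin m → ℤ)
    (hR₁ : InRClass μn μm Ω kk i k₁ j₁ l₁ i₁)
    (hR₂ : InRClass μn μm Ω kk i k₂ j₂ l₂ i₂)
    (hint : (dyRect n m k₁ j₁ l₁ i₁ ∩ dyRect n m k₂ j₂ l₂ i₂).Nonempty)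
    (hne : dyRect n m k₁ j₁ l₁ i₁ ≠ dyRect n m k₂ j₂ l₂ i₂) :
    (dyCube n k₁ j₁ ⊂ dyCube n k₂ j₂ ∧ dyCube m l₂ i₂ ⊆ dyCube m l₁ i₁) ∨
      (dyCube n k₂ j₂ ⊂ dyCube n k₁ j₁ ∧ dyCube m l₁ i₁ ⊆ dyCube m l₂ i₂) := by
  obtain ⟨⟨x, y⟩, hz₁, hz₂⟩ := hint
  obtain ⟨hx₁, hy₁⟩ := hz₁
  obtain ⟨hx₂, hy₂⟩ := hz₂
  have hIcomp := dyCube_comparable hx₁ hx₂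
  have hJcomp := dyCube_comparable hy₁ hy₂
  have hsub₁ : dyRect n m k₁ j₁ l₁ i₁ ⊆ Ω := hR₁.1.1
  have hsub₂ : dyRect n m k₂ j₂ l₂ i₂ ⊆ Ω := hR₂.1.1
  by_cases hIeq : dyCube n k₁ j₁ = dyCube n k₂ j₂
  · -- same first factor: J's must be equal, contradicting hne
    exfalso
    rcases hJcomp with hJ | hJ
    · rcases eq_or_ne (dyCube m l₁ i₁) (dyCube m l₂ i₂) with hJeq | hJne
      · exact hne (by simp only [dyRect, hIeq, hJeq])
      · refine hR₁.1.2 l₂ i₂ (HasSubset.Subset.ssubset_of_ne hJ hJne) ?_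
        refine subset_trans ?_ hsub₂
        simp only [dyRect, hIeq]
        exact subset_rfl
    · rcases eq_or_ne (dyCube m l₂ i₂) (dyCube m l₁ i₁) with hJeq | hJne
      · exact hne (by simp only [dyRect, hIeq, hJeq])
      · refine hR₂.1.2 l₁ i₁ (HasSubset.Subset.ssubset_of_ne hJ hJne) ?_
        refine subset_trans ?_ hsub₁
        simp only [dyRect, hIeq]
        exact subset_rfl
  · rcases hIcomp with hI | hI
    · -- I₁ ⊊ I₂ : show J₂ ⊆ J₁
      left
      refine ⟨HasSubset.Subset.ssubset_of_ne hI hIeq, ?_⟩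
      rcases hJcomp with hJ | hJ
      · rcases eq_or_ne (dyCube m l₁ i₁) (dyCube m l₂ i₂) with hJeq | hJne
        · exact hJeq ▸ subset_rfl
        · exfalso
          refine hR₁.1.2 l₂ i₂ (HasSubset.Subset.ssubset_of_ne hJ hJne) ?_
          refine subset_trans ?_ hsub₂
          exact Set.prod_mono hI subset_rfl
      · exact hJ
    · right
      refine ⟨HasSubset.Subset.ssubset_of_ne hI (fun h => hIeq h.symm), ?_⟩
      rcases hJcomp with hJ | hJ
      · exact hJ
      · rcases eq_or_ne (dyCube m l₂ i₂) (dyCube m l₁ i₁) with hJeq | hJne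
        · exact hJeq ▸ subset_rfl
        · exfalso
          refine hR₂.1.2 l₁ i₁ (HasSubset.Subset.ssubset_of_ne hJ hJne) ?_
          refine subset_trans ?_ hsub₁
          exact Set.prod_mono hI subset_rfl
end

section
/- In the Journé lemma setting, for each R = I × J ∈ R(k,i) with μ_n(I) > 0, define E(R) := I × (J \ ⋃{J′ : I′×J′ ∈ R(k,i), I′ ⊋ I}). Then μ(E(R)) ≥ μ(R)/2. -/
/-!
Let `S` be the union of the sides `J'`. If `μ(E(R)) < μ(R)/2`, then `S` covers more than
half of `J`. Each `I' ⊋ I` contributing to `S` has generation congruent to that of `I`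
modulo `kk + 1`, hence lies at least `kk + 1` generations higher and contains the ancestor
`I^{(kk+1)}`. So `I^{(kk+1)} × (J ∩ S) ⊆ Ω`, i.e. `Ω` fills more than half of
`R^{(kk+1,0)} = I^{(kk+1)} × J`, which puts that rectangle inside `Ω̃` and contradicts
`emb₁(R; Ω) ≤ kk`.
-/

open MeasureTheory Set

lemma mem_dyCube_iff {n : ℕ} {k : ℤ} {j : Fin n → ℤ} {x : Fin n → ℝ} :
    x ∈ dyCube n k j ↔ ∀ d, ⌊x d * 2 ^ k⌋ = j d := by
  have h2k : (0 : ℝ) < 2 ^ k := by positivity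
  simp only [dyCube, mem_ofPred_eq, Int.floor_eq_iff, zpow_neg, ← div_eq_mul_inv,
    div_le_iff₀ h2k, lt_div_iff₀ h2k]

lemma floor_mul_two_zpow_sub (r : ℝ) (k : ℤ) (t : ℕ) :
    ⌊r * 2 ^ (k - t)⌋ = ⌊r * 2 ^ k⌋ / 2 ^ t := by
  have : r * 2 ^ (k - t) = r * 2 ^ k / ((2 ^ t : ℕ) : ℝ) := by
    rw [zpow_sub₀ two_ne_zero, zpow_natCast, mul_div_assoc]; push_cast; rfl
  rw [this, Int.floor_div_natCast]; push_cast; rfl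

lemma dyCube_nonempty (n : ℕ) (k : ℤ) (j : Fin n → ℤ) : (dyCube n k j).Nonempty :=
  ⟨fun d => j d * 2 ^ (-k), mem_dyCube_iff.2 fun d => by
    rw [mul_assoc, ← zpow_add₀ two_ne_zero]; simp⟩

lemma eq_of_mem_dyCube {n : ℕ} {k : ℤ} {j j' : Fin n → ℤ} {x : Fin n → ℝ}
    (hx : x ∈ dyCube n k j) (hx' : x ∈ dyCube n k j') : j = j' := by
  rw [mem_dyCube_iff] at hx hx'
  exact funext fun d => (hx d).symm.trans (hx' d)

lemma dyCube_subset_ancestor {n : ℕ} (k : ℤ) (j : Fin n → ℤ) (t : ℕ) :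
    dyCube n k j ⊆ dyCube n (k - t) (ancIdx j t) := by
  intro x hx
  rw [mem_dyCube_iff] at hx ⊢
  intro d
  rw [floor_mul_two_zpow_sub, hx, ancIdx, Int.fdiv_eq_ediv_of_nonneg _ (by positivity)]

lemma dyCube_subset_of_le {n : ℕ} {k k' : ℤ} {j j' : Fin n → ℤ} (hk : k' ≤ k)
    (hne : (dyCube n k j ∩ dyCube n k' j').Nonempty) :
    dyCube n k j ⊆ dyCube n k' j' := by
  obtain ⟨t, rfl⟩ : ∃ t : ℕ, k' = k - t := ⟨(k - k').toNat, by omega⟩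
  obtain ⟨x, hx, hx'⟩ := hne
  rw [← eq_of_mem_dyCube (dyCube_subset_ancestor k j t hx) hx']
  exact dyCube_subset_ancestor k j t

lemma lt_of_dyCube_ssubset {n : ℕ} {k k' : ℤ} {j j' : Fin n → ℤ}
    (h : dyCube n k j ⊂ dyCube n k' j') : k' < k := by
  by_contra! hk
  obtain ⟨x, hx⟩ := dyCube_nonempty n k j
  exact h.ne (h.subset.antisymm (dyCube_subset_of_le hk ⟨x, h.subset hx, hx⟩))

lemma ancestor_subset_of_ssubset_of_modEq {n : ℕ} {k k' : ℤ} {j j' : Fin n → ℤ} {t : ℕ}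
    (h : dyCube n k j ⊂ dyCube n k' j') (hmod : k' ≡ k [ZMOD t]) :
    dyCube n (k - t) (ancIdx j t) ⊆ dyCube n k' j' := by
  have hlt := lt_of_dyCube_ssubset h
  have hle : (t : ℤ) ≤ k - k' := Int.le_of_dvd (by omega) hmod.dvd
  obtain ⟨x, hx⟩ := dyCube_nonempty n k j
  exact dyCube_subset_of_le (by omega) ⟨x, dyCube_subset_ancestor k j t hx, h.subset hx⟩

section Density

variable {α β : Type*} [MeasurableSpace α] [MeasurableSpace β] {μ : Measure α} {ν : Measure β}

lemma lt_two_mul_measure_inter_of_two_mul_measure_sdiff_lt {s t : Set β} (hs : ν s ≠ ⊤)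
    (h : 2 * ν (s \ t) < ν s) : ν s < 2 * ν (s ∩ t) := by
  have hst : ν s ≤ ν (s ∩ t) + ν (s \ t) := measure_le_inter_add_sdiff ν s t
  have hinter : ν (s ∩ t) ≠ ⊤ := ne_top_of_le_ne_top hs (measure_mono inter_subset_left)
  have hsdiff : ν (s \ t) ≠ ⊤ := ne_top_of_le_ne_top hs (measure_mono sdiff_subset)
  lift ν (s ∩ t) to NNReal using hinter with a
  lift ν (s \ t) to NNReal using hsdiff with b
  lift ν s to NNReal using hs with c
  norm_cast at h hst ⊢
  rw [← NNReal.coe_lt_coe] at h ⊢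
  rw [← NNReal.coe_le_coe] at hst
  push_cast at h hst ⊢
  linarith

variable [SFinite ν]

lemma two_mul_measure_lt_of_two_mul_prod_lt {s : Set α} {t u : Set β}
    (h : 2 * μ.prod ν (s ×ˢ t) < μ.prod ν (s ×ˢ u)) : 2 * ν t < ν u := by
  rw [Measure.prod_prod, Measure.prod_prod, mul_left_comm] at h
  exact lt_of_mul_lt_mul_left' h

lemma prod_lt_two_mul_prod_of_lt_two_mul {s : Set α} {t u : Set β} (hs : μ s ≠ 0)
    (hfin : μ.prod ν (s ×ˢ u) ≠ ⊤) (h : ν t < 2 * ν u) :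
    μ.prod ν (s ×ˢ t) < 2 * μ.prod ν (s ×ˢ u) := by
  have hu : ν u ≠ 0 := fun hu => by simp [hu] at h
  rw [Measure.prod_prod] at hfin
  have hs' : μ s ≠ ⊤ := (ENNReal.lt_top_of_mul_ne_top_left hfin hu).ne
  rw [Measure.prod_prod, Measure.prod_prod, mul_left_comm]
  exact (ENNReal.mul_lt_mul_iff_right hs hs').2 h

end Density

lemma InRClass.ancestor_prod_subset {n m : ℕ} {μn : Measure (Fin n → ℝ)}
    {μm : Measure (Fin m → ℝ)} {Ω : Set ((Fin n → ℝ) × (Fin m → ℝ))} {kk : ℕ} {i k k' l' : ℤ}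
    {j j' : Fin n → ℤ} {i' : Fin m → ℤ} (hR' : InRClass μn μm Ω kk i k' j' l' i')
    (hk : k % ((kk : ℤ) + 1) = i) (hI : dyCube n k j ⊂ dyCube n k' j') :
    dyCube n (k - ↑(kk + 1)) (ancIdx j (kk + 1)) ×ˢ dyCube m l' i' ⊆ Ω := by
  have hmod : k' ≡ k [ZMOD ↑(kk + 1)] := by
    rw [Int.ModEq]; push_cast; rw [hk, hR'.2.2]
  exact (prod_mono (ancestor_subset_of_ssubset_of_modEq hI hmod) subset_rfl).trans hR'.1.1

theorem stmt14_general {n m : ℕ}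
    (μn : Measure (Fin n → ℝ)) (μm : Measure (Fin m → ℝ)) [SFinite μm]
    (Ω : Set ((Fin n → ℝ) × (Fin m → ℝ)))
    (hΩfin : μn.prod μm Ω < ⊤)
    (kk : ℕ) (i : ℤ)
    (k : ℤ) (j : Fin n → ℤ) (l : ℤ) (im : Fin m → ℤ)
    (hR : InRClass μn μm Ω kk i k j l im)
    (hIpos : 0 < μn (dyCube n k j)) :
    μn.prod μm (dyRect n m k j l im) ≤
      2 * μn.prod μm (dyCube n k j ×ˢ
        (dyCube m l im \
          ⋃ (k' : ℤ) (j' : Fin n → ℤ) (l' : ℤ) (i' : Fin m → ℤ)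
            (_ : InRClass μn μm Ω kk i k' j' l' i' ∧ dyCube n k j ⊂ dyCube n k' j'),
            dyCube m l' i')) := by
  obtain ⟨⟨hRΩ, -⟩, hanc, hgen⟩ := hR
  set I := dyCube n k j
  set J := dyCube m l im
  set S := ⋃ (k' : ℤ) (j' : Fin n → ℤ) (l' : ℤ) (i' : Fin m → ℤ)
    (_ : InRClass μn μm Ω kk i k' j' l' i' ∧ I ⊂ dyCube n k' j'), dyCube m l' i'
  set I₂ := dyCube n (k - ↑(kk + 1)) (ancIdx j (kk + 1))
  by_contra! hcon
  have hRfin : μn I * μm J ≠ ⊤ := by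
    rw [← Measure.prod_prod]; exact ((measure_mono hRΩ).trans_lt hΩfin).ne
  have hJfin : μm J ≠ ⊤ := (ENNReal.lt_top_of_mul_ne_top_right hRfin hIpos.ne').ne
  have hJS : μm J < 2 * μm (J ∩ S) :=
    lt_two_mul_measure_inter_of_two_mul_measure_sdiff_lt hJfin
      (two_mul_measure_lt_of_two_mul_prod_lt hcon)
  have hI₂S : I₂ ×ˢ S ⊆ Ω := by
    rintro ⟨x, y⟩ ⟨hx, hy⟩
    simp only [S, mem_iUnion] at hy
    obtain ⟨k', j', l', i', ⟨hR', hII'⟩, hy⟩ := hy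
    exact hR'.ancestor_prod_subset hgen hII' ⟨hx, hy⟩
  have hI₂JS : I₂ ×ˢ (J ∩ S) ⊆ dyRect n m (k - ↑(kk + 1)) (ancIdx j (kk + 1)) l im ∩ Ω :=
    subset_inter (prod_mono_right inter_subset_left)
      ((prod_mono_right inter_subset_right).trans hI₂S)
  refine hanc fun z hz => ⟨k - ↑(kk + 1), ancIdx j (kk + 1), l, im, hz, ?_⟩
  calc μn.prod μm (I₂ ×ˢ J)
      < 2 * μn.prod μm (I₂ ×ˢ (J ∩ S)) :=
        prod_lt_two_mul_prod_of_lt_two_mul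
          (hIpos.trans_le (measure_mono (dyCube_subset_ancestor k j _))).ne'
          ((measure_mono (hI₂JS.trans inter_subset_right)).trans_lt hΩfin).ne hJS
    _ ≤ _ := by gcongr

/-- For `R = I × J ∈ R(kk,i)` with `μ_n(I) > 0`, the set
`E(R) = I × (J \ ⋃ {J' : I' × J' ∈ R(kk,i), I' ⊋ I})` satisfies
`μ(E(R)) ≥ μ(R)/2`. -/
theorem stmt14 {n m : ℕ} (hn : 0 < n) (hm : 0 < m)
    (μn : Measure (Fin n → ℝ)) (μm : Measure (Fin m → ℝ)) [SFinite μn] [SFinite μm]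
    (Ω : Set ((Fin n → ℝ) × (Fin m → ℝ)))
    (hΩfin : μn.prod μm Ω < ⊤)
    (hΩcov : ∀ x ∈ Ω, ∃ (k : ℤ) (j : Fin n → ℤ) (l : ℤ) (i : Fin m → ℤ),
      x ∈ dyRect n m k j l i ∧ dyRect n m k j l i ⊆ Ω)
    (kk : ℕ) (i : ℤ) (hi₀ : 0 ≤ i) (hik : i ≤ kk)
    (k : ℤ) (j : Fin n → ℤ) (l : ℤ) (im : Fin m → ℤ)
    (hR : InRClass μn μm Ω kk i k j l im)
    (hIpos : 0 < μn (dyCube n k j)) :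
    μn.prod μm (dyRect n m k j l im) ≤
      2 * μn.prod μm (dyCube n k j ×ˢ
        (dyCube m l im \
          ⋃ (k' : ℤ) (j' : Fin n → ℤ) (l' : ℤ) (i' : Fin m → ℤ)
            (_ : InRClass μn μm Ω kk i k' j' l' i' ∧ dyCube n k j ⊂ dyCube n k' j'),
            dyCube m l' i')) :=
  stmt14_general μn μm Ω hΩfin kk i k j l im hR hIpos
end
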